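/- Let x be an infinite individual binary image, l : {0,1}×[0,1] → [0, l_max] a bounded loss function, and Ψ¹ = {Ψ¹_n}, Ψ² = {Ψ²_n} any two sequences of scans such that the limits L_{Ψ¹}(x) and L_{Ψ²}(x) exist, and such that the asymptotic empirical conditional entropies coincide: Ĥ_{Ψ¹}(x) = Ĥ_{Ψ²}(x). Then | L_{Ψ¹}(x) − L_{Ψ²}(x) | ≤ 2·ε_l. -/

import Mathlib

open MeasureTheory Filter Real

namespace Scandiction

variable {A D B : Type*}

def visits (Ψ : ∀ t : ℕ, (Fin t → A) → B) (x : B → A) : ℕ → B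
  | t => Ψ t fun i : Fin t => x (visits Ψ x i)
  decreasing_by exact i.isLt

def IsValidScan [Fintype B] (Ψ : ∀ t : ℕ, (Fin t → A) → B) : Prop :=
  ∀ x : B → A, Function.Bijective fun t : Fin (Fintype.card B) => visits Ψ x t.1

noncomputable def cumLoss [Fintype B] (l : A → D → ℝ)
    (Ψ : ∀ t : ℕ, (Fin t → A) → B) (F : ∀ t : ℕ, (Fin t → A) → D) (x : B → A) : ℝ :=
  ∑ t : Fin (Fintype.card B),
    l (x (visits Ψ x t.1)) (F t.1 fun i : Fin t.1 => x (visits Ψ x i.1))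

/-- Binary entropy (in nats): `h_b(p) = -p log p - (1-p) log (1-p)`. -/
noncomputable def hb (p : ℝ) : ℝ := Real.negMulLog p + Real.negMulLog (1 - p)

/-- Bayes envelope `φ_l(p) = inf_{q ∈ [0,1]} [(1-p)·l(0,q) + p·l(1,q)]`. -/
noncomputable def bayesEnv (l : Bool → unitInterval → ℝ) (p : ℝ) : ℝ :=
  ⨅ q : unitInterval, ((1 - p) * l false q + p * l true q)

/-- `ε_l(α,β) = sup_{p ∈ [0,1]} |α·h_b(p) + β − φ_l(p)|`. -/
noncomputable def epsF (l : Bool → unitInterval → ℝ) (α β : ℝ) : ℝ :=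
  ⨆ p : unitInterval, |α * hb (p : ℝ) + β - bayesEnv l (p : ℝ)|

/-- `ε_l = inf_{α,β} ε_l(α,β)`. -/
noncomputable def epsL (l : Bool → unitInterval → ℝ) : ℝ :=
  ⨅ ab : ℝ × ℝ, epsF l ab.1 ab.2

/-- Number of windows `y_{t-k}, …, y_t`, `k ≤ t < N`, equal to `s ∈ {0,1}^{k+1}`. -/
def empCount (y : ℕ → Bool) (N k : ℕ) (s : Fin (k + 1) → Bool) : ℕ :=
  ((Finset.Ico k N).filter fun t => ∀ i : Fin (k + 1), y (t - k + i.1) = s i).card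

/-- Number of windows whose first `k` symbols equal `s' ∈ {0,1}^k`
(the marginal count, obtained by summing over the trailing symbol). -/
def margCount (y : ℕ → Bool) (N k : ℕ) (s' : Fin k → Bool) : ℕ :=
  ((Finset.Ico k N).filter fun t => ∀ i : Fin k, y (t - k + i.1) = s' i).card

/-- Empirical conditional probability `P̂^{k+1}(b | s')`, with `0/0 := 1/2`. -/
noncomputable def condP (y : ℕ → Bool) (N k : ℕ) (s' : Fin k → Bool) (b : Bool) : ℝ :=
  if margCount y N k s' = 0 then 1 / 2
  else (empCount y N k (Fin.snoc s' b) : ℝ) / (margCount y N k s' : ℝ)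

/-- Empirical conditional entropy of order `k` (in nats):
`Ĥ^{k+1}(X|X^k) = -Σ_{s'} P̂^{k+1}(s') Σ_b P̂^{k+1}(b|s') log P̂^{k+1}(b|s')`. -/
noncomputable def empCondEnt (y : ℕ → Bool) (N k : ℕ) : ℝ :=
  ∑ s' : Fin k → Bool,
    ((margCount y N k s' : ℝ) / ((N : ℝ) - k)) *
      ∑ b : Bool, Real.negMulLog (condP y N k s' b)

/-- The sequence of values read along the realized scan `Ψ` of the image `x`. -/
def scanSeq {B : Type*} (Ψ : ∀ t : ℕ, (Fin t → Bool) → B) (x : B → Bool) : ℕ → Bool :=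
  fun t => x (visits Ψ x t)

/-- Restriction of an infinite binary image to the `n × n` square `V_n`. -/
def restrB (n : ℕ) (x : ℕ × ℕ → Bool) : Fin n × Fin n → Bool :=
  fun p => x (p.1.1, p.2.1)

/-- Window of length `k` ending just before position `t` reading... -/
def win (y : ℕ → Bool) (k t : ℕ) : Fin k → Bool := fun i => y (t - k + i.1)

lemma margCount_eq (y : ℕ → Bool) (N k : ℕ) (s' : Fin k → Bool) :
    margCount y N k s' = ((Finset.Ico k N).filter fun t => win y k t = s').card := by
  unfold margCount win
  congr 1
  apply Finset.filter_congr
  intro t _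
  simp [funext_iff]

lemma empCount_snoc (y : ℕ → Bool) (N k : ℕ) (s' : Fin k → Bool) (b : Bool) :
    empCount y N k (Fin.snoc s' b) =
      ((Finset.Ico k N).filter fun t => win y k t = s' ∧ y t = b).card := by
  unfold empCount win
  congr 1
  apply Finset.filter_congr
  intro t ht
  have hk : k ≤ t := (Finset.mem_Ico.1 ht).1
  constructor
  · intro h
    refine ⟨funext fun j => ?_, ?_⟩
    · have := h j.castSucc
      rwa [Fin.snoc_castSucc] at this
    · have := h (Fin.last k)
      rw [Fin.snoc_last] at this
      simpa [Nat.sub_add_cancel hk] using this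
  · rintro ⟨h1, h2⟩ i
    refine Fin.lastCases ?_ (fun j => ?_) i
    · rw [Fin.snoc_last]
      simpa [Nat.sub_add_cancel hk] using h2
    · rw [Fin.snoc_castSucc]
      exact congrFun h1 j

lemma empCount_add (y : ℕ → Bool) (N k : ℕ) (s' : Fin k → Bool) :
    empCount y N k (Fin.snoc s' false) + empCount y N k (Fin.snoc s' true)
      = margCount y N k s' := by
  classical
  rw [empCount_snoc, empCount_snoc, margCount_eq]
  have h := Finset.card_filter_add_card_filter_not
    (s := (Finset.Ico k N).filter fun t => win y k t = s') (fun t => y t = false)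
  rw [Finset.filter_filter, Finset.filter_filter] at h
  rw [← h]
  congr 2
  apply Finset.filter_congr
  intro t _
  simp

lemma sum_margCount (y : ℕ → Bool) (N k : ℕ) :
    ∑ s' : Fin k → Bool, margCount y N k s' = N - k := by
  classical
  simp_rw [margCount_eq]
  rw [← Finset.card_eq_sum_card_fiberwise (fun t _ => Finset.mem_univ (win y k t))]
  simp

lemma margCount_of_le (y : ℕ → Bool) {N k : ℕ} (h : N ≤ k) (s' : Fin k → Bool) :
    margCount y N k s' = 0 := by
  unfold margCount
  rw [Finset.Ico_eq_empty (by omega)]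
  simp

lemma empCount_le (y : ℕ → Bool) (N k : ℕ) (s' : Fin k → Bool) (b : Bool) :
    empCount y N k (Fin.snoc s' b) ≤ margCount y N k s' := by
  rw [← empCount_add y N k s']
  cases b <;> omega

lemma condP_nonneg (y : ℕ → Bool) (N k : ℕ) (s' : Fin k → Bool) (b : Bool) :
    0 ≤ condP y N k s' b := by
  unfold condP
  split
  · norm_num
  · positivity

lemma condP_le_one (y : ℕ → Bool) (N k : ℕ) (s' : Fin k → Bool) (b : Bool) :
    condP y N k s' b ≤ 1 := by
  unfold condP
  split
  · norm_num
  · rename_i h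
    have hm : (0:ℝ) < (margCount y N k s' : ℝ) := by
      exact_mod_cast Nat.pos_of_ne_zero h
    rw [div_le_one hm]
    exact_mod_cast empCount_le y N k s' b

lemma condP_false_eq (y : ℕ → Bool) (N k : ℕ) (s' : Fin k → Bool) :
    condP y N k s' false = 1 - condP y N k s' true := by
  unfold condP
  split
  · norm_num
  · rename_i h
    have hadd := empCount_add y N k s'
    have hm : (0:ℝ) < (margCount y N k s' : ℝ) := by exact_mod_cast Nat.pos_of_ne_zero h
    have hc : (empCount y N k (Fin.snoc s' false) : ℝ)
        + (empCount y N k (Fin.snoc s' true) : ℝ) = (margCount y N k s' : ℝ) := by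
      exact_mod_cast congrArg (Nat.cast (R := ℝ)) hadd
    field_simp
    linarith
lemma hb_eq (p : ℝ) : hb p = Real.binEntropy p :=
  (Real.binEntropy_eq_negMulLog_add_negMulLog_one_sub p).symm

lemma hb_nonneg {p : ℝ} (h0 : 0 ≤ p) (h1 : p ≤ 1) : 0 ≤ hb p := by
  rw [hb_eq]; exact Real.binEntropy_nonneg h0 h1

lemma hb_le_log_two (p : ℝ) : hb p ≤ Real.log 2 := by
  rw [hb_eq]; exact Real.binEntropy_le_log_two

lemma bayesEnv_nonneg {lmax : ℝ} {l : Bool → unitInterval → ℝ}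
    (hl : ∀ b q, 0 ≤ l b q ∧ l b q ≤ lmax) {p : ℝ} (h0 : 0 ≤ p) (h1 : p ≤ 1) :
    0 ≤ bayesEnv l p := by
  refine le_ciInf fun q => ?_
  have := (hl false q).1
  have := (hl true q).1
  nlinarith

lemma bayesEnv_bddBelow {lmax : ℝ} {l : Bool → unitInterval → ℝ}
    (hl : ∀ b q, 0 ≤ l b q ∧ l b q ≤ lmax) {p : ℝ} (h0 : 0 ≤ p) (h1 : p ≤ 1) :
    BddBelow (Set.range fun q : unitInterval => ((1 - p) * l false q + p * l true q)) := by
  refine ⟨0, fun v hv => ?_⟩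
  obtain ⟨q, rfl⟩ := hv
  have := (hl false q).1
  have := (hl true q).1
  dsimp only
  nlinarith

lemma bayesEnv_le_lmax {lmax : ℝ} {l : Bool → unitInterval → ℝ}
    (hl : ∀ b q, 0 ≤ l b q ∧ l b q ≤ lmax) {p : ℝ} (h0 : 0 ≤ p) (h1 : p ≤ 1) :
    bayesEnv l p ≤ lmax := by
  refine ciInf_le_of_le (bayesEnv_bddBelow hl h0 h1) 0 ?_
  have h2 := (hl false 0).2
  have h3 := (hl true 0).2
  nlinarith

lemma lmax_nonneg {lmax : ℝ} {l : Bool → unitInterval → ℝ}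
    (hl : ∀ b q, 0 ≤ l b q ∧ l b q ≤ lmax) : 0 ≤ lmax :=
  le_trans (hl true 0).1 (hl true 0).2

lemma epsF_bddAbove {lmax : ℝ} {l : Bool → unitInterval → ℝ}
    (hl : ∀ b q, 0 ≤ l b q ∧ l b q ≤ lmax) (α β : ℝ) :
    BddAbove (Set.range fun p : unitInterval =>
      |α * hb (p : ℝ) + β - bayesEnv l (p : ℝ)|) := by
  refine ⟨|α| * Real.log 2 + |β| + lmax, fun v hv => ?_⟩
  obtain ⟨p, rfl⟩ := hv
  have h0 := p.2.1
  have h1 := p.2.2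
  have hb0 := hb_nonneg h0 h1
  have hb1 := hb_le_log_two (p : ℝ)
  have hφ0 := bayesEnv_nonneg hl h0 h1
  have hφ1 := bayesEnv_le_lmax hl h0 h1
  have : |α * hb (p : ℝ)| ≤ |α| * Real.log 2 := by
    rw [abs_mul]
    refine mul_le_mul_of_nonneg_left (abs_le.2 ⟨?_, hb1⟩) (abs_nonneg α)
    linarith [Real.log_nonneg (by norm_num : (1:ℝ) ≤ 2)]
  calc |α * hb (p : ℝ) + β - bayesEnv l (p : ℝ)|
      ≤ |α * hb (p : ℝ)| + |β| + |bayesEnv l (p : ℝ)| := by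
        have := abs_add_le (α * hb (p : ℝ) + β) (-(bayesEnv l (p:ℝ)))
        have := abs_add_le (α * hb (p : ℝ)) β
        simp only [abs_neg] at *
        calc |α * hb (p : ℝ) + β - bayesEnv l (p : ℝ)|
            = |(α * hb (p : ℝ) + β) + (-(bayesEnv l (p:ℝ)))| := by ring_nf
          _ ≤ |α * hb (p : ℝ) + β| + |bayesEnv l (p:ℝ)| := by
              simpa using abs_add_le (α * hb (p : ℝ) + β) (-(bayesEnv l (p:ℝ)))
          _ ≤ |α * hb (p : ℝ)| + |β| + |bayesEnv l (p:ℝ)| := by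
              linarith [abs_add_le (α * hb (p : ℝ)) β]
    _ ≤ |α| * Real.log 2 + |β| + lmax := by
        rw [abs_of_nonneg hφ0]
        linarith

lemma le_epsF {lmax : ℝ} {l : Bool → unitInterval → ℝ}
    (hl : ∀ b q, 0 ≤ l b q ∧ l b q ≤ lmax) (α β : ℝ) (p : unitInterval) :
    |α * hb (p : ℝ) + β - bayesEnv l (p : ℝ)| ≤ epsF l α β :=
  le_ciSup (epsF_bddAbove hl α β) p

lemma epsF_nonneg {lmax : ℝ} {l : Bool → unitInterval → ℝ}
    (hl : ∀ b q, 0 ≤ l b q ∧ l b q ≤ lmax) (α β : ℝ) : 0 ≤ epsF l α β :=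
  le_trans (abs_nonneg _) (le_epsF hl α β 0)

lemma empCondEnt_eq (y : ℕ → Bool) (N k : ℕ) :
    empCondEnt y N k = ∑ s' : Fin k → Bool,
      ((margCount y N k s' : ℝ) / ((N : ℝ) - k)) * hb (condP y N k s' true) := by
  unfold empCondEnt
  refine Finset.sum_congr rfl fun s' _ => ?_
  congr 1
  rw [Fintype.sum_bool, condP_false_eq, hb]

lemma empCondEnt_nonneg (y : ℕ → Bool) (N k : ℕ) : 0 ≤ empCondEnt y N k := by
  rw [empCondEnt_eq]
  rcases le_or_gt N k with h | h
  · apply Finset.sum_nonneg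
    intro s' _
    rw [margCount_of_le y h]
    simp
  · apply Finset.sum_nonneg
    intro s' _
    have hW : (0:ℝ) < (N : ℝ) - k := by
      have : (k:ℝ) < N := by exact_mod_cast h
      linarith
    have := hb_nonneg (condP_nonneg y N k s' true) (condP_le_one y N k s' true)
    positivity

lemma sum_margCount_cast (y : ℕ → Bool) {N k : ℕ} (h : k ≤ N) :
    ∑ s' : Fin k → Bool, (margCount y N k s' : ℝ) = (N : ℝ) - k := by
  rw [← Nat.cast_sum, sum_margCount, Nat.cast_sub h]

lemma empCondEnt_le_log_two (y : ℕ → Bool) (N k : ℕ) :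
    empCondEnt y N k ≤ Real.log 2 := by
  rw [empCondEnt_eq]
  rcases le_or_gt N k with h | h
  · have : ∀ s' : Fin k → Bool, ((margCount y N k s' : ℝ) / ((N : ℝ) - k))
        * hb (condP y N k s' true) = 0 := by
      intro s'; rw [margCount_of_le y h]; simp
    rw [Finset.sum_congr rfl fun s' _ => this s']
    simp [Real.log_nonneg one_le_two]
  · have hW : (0:ℝ) < (N : ℝ) - k := by
      have : (k:ℝ) < N := by exact_mod_cast h
      linarith
    calc ∑ s' : Fin k → Bool, ((margCount y N k s' : ℝ) / ((N : ℝ) - k))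
          * hb (condP y N k s' true)
        ≤ ∑ s' : Fin k → Bool, ((margCount y N k s' : ℝ) / ((N : ℝ) - k)) * Real.log 2 := by
          refine Finset.sum_le_sum fun s' _ => ?_
          exact mul_le_mul_of_nonneg_left (hb_le_log_two _) (by positivity)
      _ = Real.log 2 := by
          rw [← Finset.sum_mul, ← Finset.sum_div, sum_margCount_cast y h.le,
            div_self hW.ne', one_mul]
lemma hb_zero : hb 0 = 0 := by simp [hb, Real.negMulLog]

lemma hb_one : hb 1 = 0 := by simp [hb, Real.negMulLog]

lemma bayesEnv_ge_min {lmax : ℝ} {l : Bool → unitInterval → ℝ}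
    (hl : ∀ b q, 0 ≤ l b q ∧ l b q ≤ lmax) {p : ℝ} (h0 : 0 ≤ p) (h1 : p ≤ 1) :
    min (bayesEnv l 0) (bayesEnv l 1) ≤ bayesEnv l p := by
  refine le_ciInf fun q => ?_
  have hf : bayesEnv l 0 ≤ l false q := by
    calc bayesEnv l 0 ≤ (1 - 0) * l false q + 0 * l true q :=
          ciInf_le (bayesEnv_bddBelow hl (le_refl (0:ℝ)) zero_le_one) q
      _ = l false q := by ring
  have ht : bayesEnv l 1 ≤ l true q := by
    calc bayesEnv l 1 ≤ (1 - 1) * l false q + 1 * l true q :=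
          ciInf_le (bayesEnv_bddBelow hl zero_le_one (le_refl (1:ℝ))) q
      _ = l true q := by ring
  have h2 : min (bayesEnv l 0) (bayesEnv l 1) ≤ bayesEnv l 0 := min_le_left _ _
  have h3 : min (bayesEnv l 0) (bayesEnv l 1) ≤ bayesEnv l 1 := min_le_right _ _
  have hfq := (hl false q).1
  have htq := (hl true q).1
  nlinarith

lemma epsF_reduction {lmax : ℝ} {l : Bool → unitInterval → ℝ}
    (hl : ∀ b q, 0 ≤ l b q ∧ l b q ≤ lmax) (α β : ℝ) :
    ∃ α' β', 0 ≤ α' ∧ epsF l α' β' ≤ epsF l α β := by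
  rcases le_or_gt 0 α with hα | hα
  · exact ⟨α, β, hα, le_rfl⟩
  set ε := epsF l α β with hε
  set M := ⨆ p : unitInterval, bayesEnv l (p : ℝ) with hM
  set m := min (bayesEnv l 0) (bayesEnv l 1) with hm
  have hMb : BddAbove (Set.range fun p : unitInterval => bayesEnv l (p : ℝ)) := by
    refine ⟨lmax, fun v hv => ?_⟩
    obtain ⟨p, rfl⟩ := hv
    exact bayesEnv_le_lmax hl p.2.1 p.2.2
  have hφM : ∀ p : unitInterval, bayesEnv l (p : ℝ) ≤ M := fun p => le_ciSup hMb p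
  have hφm : ∀ p : unitInterval, m ≤ bayesEnv l (p : ℝ) := fun p =>
    bayesEnv_ge_min hl p.2.1 p.2.2
  -- M ≤ β + ε
  have hMε : M ≤ β + ε := by
    refine ciSup_le fun p => ?_
    have h := (abs_le.1 (le_epsF hl α β p)).1
    have hbnn := hb_nonneg p.2.1 p.2.2
    nlinarith
  -- β - m ≤ ε
  have hmε : β - m ≤ ε := by
    have h0 : |α * hb ((0 : unitInterval) : ℝ) + β - bayesEnv l ((0 : unitInterval) : ℝ)|
        ≤ ε := le_epsF hl α β 0
    have h1 : |α * hb ((1 : unitInterval) : ℝ) + β - bayesEnv l ((1 : unitInterval) : ℝ)|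
        ≤ ε := le_epsF hl α β 1
    rw [Set.Icc.coe_zero, hb_zero] at h0
    rw [Set.Icc.coe_one, hb_one] at h1
    have h0' := (abs_le.1 h0).2
    have h1' := (abs_le.1 h1).2
    rcases min_cases (bayesEnv l 0) (bayesEnv l 1) with ⟨hmin, _⟩ | ⟨hmin, _⟩ <;>
      rw [hm, hmin] <;> linarith
  refine ⟨0, (M + m) / 2, le_refl 0, ?_⟩
  refine ciSup_le fun p => ?_
  have hMm : m ≤ M := le_trans (hφm 0) (hφM 0)
  have hu := hφM p
  have hd := hφm p
  rw [zero_mul, zero_add]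
  rw [abs_le]
  constructor <;> [skip; skip] <;> nlinarith
lemma condP_of_ne (y : ℕ → Bool) (N k : ℕ) (s' : Fin k → Bool) (b : Bool)
    (h : margCount y N k s' ≠ 0) :
    condP y N k s' b = (empCount y N k (Fin.snoc s' b) : ℝ) / (margCount y N k s' : ℝ) := by
  unfold condP
  rw [if_neg h]

lemma context_loss {lmax : ℝ} {l : Bool → unitInterval → ℝ}
    (hl : ∀ b q, 0 ≤ l b q ∧ l b q ≤ lmax)
    (y : ℕ → Bool) (N k : ℕ) (g : (Fin k → Bool) → unitInterval) (s' : Fin k → Bool)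
    (hg : ∀ q : unitInterval,
      condP y N k s' false * l false (g s') + condP y N k s' true * l true (g s')
        ≤ condP y N k s' false * l false q + condP y N k s' true * l true q) :
    (empCount y N k (Fin.snoc s' false) : ℝ) * l false (g s')
      + (empCount y N k (Fin.snoc s' true) : ℝ) * l true (g s')
      = (margCount y N k s' : ℝ) * bayesEnv l (condP y N k s' true) := by
  by_cases h : margCount y N k s' = 0
  · have hadd := empCount_add y N k s'
    rw [h] at hadd
    have h1 : empCount y N k (Fin.snoc s' false) = 0 := by omega
    have h2 : empCount y N k (Fin.snoc s' true) = 0 := by omega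
    rw [h, h1, h2]
    simp
  · have hm : (0:ℝ) < (margCount y N k s' : ℝ) := by exact_mod_cast Nat.pos_of_ne_zero h
    set p := condP y N k s' true with hp
    have hpf : condP y N k s' false = 1 - p := condP_false_eq y N k s'
    have hp0 : 0 ≤ p := condP_nonneg y N k s' true
    have hp1 : p ≤ 1 := condP_le_one y N k s' true
    have henv : bayesEnv l p = (1 - p) * l false (g s') + p * l true (g s') := by
      apply le_antisymm
      · exact ciInf_le (bayesEnv_bddBelow hl hp0 hp1) (g s')
      · refine le_ciInf fun q => ?_
        have hq := hg q
        rw [hpf] at hq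
        exact hq
    have hef : (empCount y N k (Fin.snoc s' false) : ℝ)
        = (margCount y N k s' : ℝ) * (1 - p) := by
      rw [← hpf, condP_of_ne y N k s' false h]
      field_simp
    have het : (empCount y N k (Fin.snoc s' true) : ℝ)
        = (margCount y N k s' : ℝ) * p := by
      rw [hp, condP_of_ne y N k s' true h]
      field_simp
    rw [henv, hef, het]
    ring

lemma tail_loss {lmax : ℝ} {l : Bool → unitInterval → ℝ}
    (hl : ∀ b q, 0 ≤ l b q ∧ l b q ≤ lmax)
    (y : ℕ → Bool) (N k : ℕ) (g : (Fin k → Bool) → unitInterval)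
    (hg : ∀ (s' : Fin k → Bool) (q : unitInterval),
      condP y N k s' false * l false (g s') + condP y N k s' true * l true (g s')
        ≤ condP y N k s' false * l false q + condP y N k s' true * l true q) :
    ∑ t ∈ Finset.Ico k N, l (y t) (g (win y k t))
      = ∑ s' : Fin k → Bool, (margCount y N k s' : ℝ) * bayesEnv l (condP y N k s' true) := by
  classical
  rw [← Finset.sum_fiberwise_of_maps_to
    (g := fun t => (win y k t, y t)) (t := Finset.univ)
    (fun t _ => Finset.mem_univ _) (fun t => l (y t) (g (win y k t)))]
  rw [Fintype.sum_prod_type]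
  refine Finset.sum_congr rfl fun s' _ => ?_
  have hfib : ∀ b : Bool,
      ∑ t ∈ (Finset.Ico k N).filter (fun t => (win y k t, y t) = (s', b)),
        l (y t) (g (win y k t))
      = (empCount y N k (Fin.snoc s' b) : ℝ) * l b (g s') := by
    intro b
    have hconst : ∀ t ∈ (Finset.Ico k N).filter (fun t => (win y k t, y t) = (s', b)),
        l (y t) (g (win y k t)) = l b (g s') := by
      intro t ht
      have hpair := (Finset.mem_filter.1 ht).2
      rw [Prod.mk.injEq] at hpair
      rw [hpair.1, hpair.2]
    rw [Finset.sum_congr rfl hconst, Finset.sum_const, empCount_snoc]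
    have : (Finset.Ico k N).filter (fun t => (win y k t, y t) = (s', b))
        = (Finset.Ico k N).filter (fun t => win y k t = s' ∧ y t = b) := by
      apply Finset.filter_congr
      intro t _
      simp [Prod.ext_iff]
    rw [this, nsmul_eq_mul]
  rw [Fintype.sum_bool, hfib true, hfib false,
    ← context_loss hl y N k g s' (hg s')]
  ring
lemma key_bound {lmax : ℝ} {l : Bool → unitInterval → ℝ}
    (hl : ∀ b q, 0 ≤ l b q ∧ l b q ≤ lmax)
    (y : ℕ → Bool) {N k : ℕ} (hkN : k < N)
    (g : (Fin k → Bool) → unitInterval)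
    (hg : ∀ (s' : Fin k → Bool) (q : unitInterval),
      condP y N k s' false * l false (g s') + condP y N k s' true * l true (g s')
        ≤ condP y N k s' false * l false q + condP y N k s' true * l true q)
    (F : ∀ t : ℕ, (Fin t → Bool) → unitInterval)
    (hF : ∀ (t : ℕ) (ht : k ≤ t) (p : Fin t → Bool),
      F t p = g fun i : Fin k => p ⟨t - k + i.1, Nat.lt_of_lt_of_le (Nat.add_lt_add_left i.isLt _) (le_of_eq (Nat.sub_add_cancel ht))⟩)
    (α β : ℝ) :
    |(∑ t ∈ Finset.range N, l (y t) (F t fun i : Fin t => y i.1)) / N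
      - (α * empCondEnt y N k + β)| ≤ epsF l α β + 2 * k * lmax / N := by
  classical
  have hN : 0 < N := lt_of_le_of_lt (Nat.zero_le k) hkN
  have hN0 : (0:ℝ) < (N:ℝ) := by exact_mod_cast hN
  have hW : (0:ℝ) < (N:ℝ) - k := by
    have : (k:ℝ) < (N:ℝ) := by exact_mod_cast hkN
    linarith
  set ε := epsF l α β with hεdef
  set W := (N:ℝ) - k with hWdef
  set head := ∑ t ∈ Finset.range k, l (y t) (F t fun i : Fin t => y i.1) with hhead
  have hhead0 : 0 ≤ head := Finset.sum_nonneg fun t _ => (hl _ _).1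
  have hheadk : head ≤ k * lmax := by
    calc head ≤ ∑ _t ∈ Finset.range k, lmax := Finset.sum_le_sum fun t _ => (hl _ _).2
      _ = k * lmax := by rw [Finset.sum_const, Finset.card_range, nsmul_eq_mul]
  set m := fun s' : Fin k → Bool => (margCount y N k s' : ℝ) with hmdef
  set p := fun s' : Fin k → Bool => condP y N k s' true with hpdef
  set φ := fun s' : Fin k → Bool => bayesEnv l (p s') with hφdef
  have hsplit : ∑ t ∈ Finset.range N, l (y t) (F t fun i : Fin t => y i.1)
      = head + ∑ s' : Fin k → Bool, m s' * φ s' := by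
    rw [← Finset.sum_range_add_sum_Ico _ hkN.le]
    congr 1
    rw [← tail_loss hl y N k g hg]
    refine Finset.sum_congr rfl fun t ht => ?_
    rw [hF t (Finset.mem_Ico.1 ht).1]
    rfl
  have hm0 : ∀ s', 0 ≤ m s' := fun s' => Nat.cast_nonneg _
  have hsum_m : ∑ s', m s' = W := sum_margCount_cast y hkN.le
  have hw1 : ∑ s' : Fin k → Bool, m s' / W = 1 := by
    rw [← Finset.sum_div, hsum_m, div_self hW.ne']
  have hp0 : ∀ s', 0 ≤ p s' := fun s' => condP_nonneg y N k s' true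
  have hp1 : ∀ s', p s' ≤ 1 := fun s' => condP_le_one y N k s' true
  have hφ0 : ∀ s', 0 ≤ φ s' := fun s' => bayesEnv_nonneg hl (hp0 s') (hp1 s')
  have hφl : ∀ s', φ s' ≤ lmax := fun s' => bayesEnv_le_lmax hl (hp0 s') (hp1 s')
  have heps : ∀ s', |α * hb (p s') + β - φ s'| ≤ ε := fun s' =>
    le_epsF hl α β ⟨p s', hp0 s', hp1 s'⟩
  have hent : empCondEnt y N k = ∑ s', (m s' / W) * hb (p s') := empCondEnt_eq y N k
  have hid : (head + ∑ s', m s' * φ s') / (N:ℝ) - (α * empCondEnt y N k + β)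
      = head / (N:ℝ)
        + ∑ s', (m s' / W) * ((W / (N:ℝ)) * φ s' - (α * hb (p s') + β)) := by
    have expand : ∀ s' : Fin k → Bool,
        (m s' / W) * ((W / (N:ℝ)) * φ s' - (α * hb (p s') + β))
        = m s' * φ s' / (N:ℝ) - (α * ((m s' / W) * hb (p s')) + β * (m s' / W)) := by
      intro s'
      field_simp
    rw [Finset.sum_congr rfl fun s' _ => expand s',
      Finset.sum_sub_distrib, Finset.sum_add_distrib, ← Finset.mul_sum, ← Finset.mul_sum,
      hw1, ← hent, ← Finset.sum_div]
    ring
  have hterm : ∀ s' : Fin k → Bool,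
      |(m s' / W) * ((W / (N:ℝ)) * φ s' - (α * hb (p s') + β))|
      ≤ (m s' / W) * (ε + (k:ℝ) * lmax / N) := by
    intro s'
    rw [abs_mul, abs_of_nonneg (by positivity : (0:ℝ) ≤ m s' / W)]
    refine mul_le_mul_of_nonneg_left ?_ (by positivity)
    have h1 : (W / (N:ℝ)) * φ s' - (α * hb (p s') + β)
        = -(α * hb (p s') + β - φ s') + (W / (N:ℝ) - 1) * φ s' := by ring
    rw [h1]
    have h2 : W / (N:ℝ) - 1 = -((k:ℝ) / N) := by
      rw [hWdef]
      field_simp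
      ring
    calc |-(α * hb (p s') + β - φ s') + (W / (N:ℝ) - 1) * φ s'|
        ≤ |-(α * hb (p s') + β - φ s')| + |(W / (N:ℝ) - 1) * φ s'| := abs_add_le _ _
      _ ≤ ε + (k:ℝ) * lmax / N := by
          rw [abs_neg, h2, abs_mul, abs_neg, abs_of_nonneg (by positivity : (0:ℝ) ≤ (k:ℝ)/N),
            abs_of_nonneg (hφ0 s')]
          have h3 := heps s'
          have h4 : (k:ℝ)/N * φ s' ≤ (k:ℝ)/N * lmax :=
            mul_le_mul_of_nonneg_left (hφl s') (by positivity)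
          have h5 : (k:ℝ)/N * lmax = (k:ℝ) * lmax / N := by ring
          linarith
  have hsum_bound : |∑ s', (m s' / W) * ((W / (N:ℝ)) * φ s' - (α * hb (p s') + β))|
      ≤ ε + (k:ℝ) * lmax / N := by
    calc |∑ s', (m s' / W) * ((W / (N:ℝ)) * φ s' - (α * hb (p s') + β))|
        ≤ ∑ s', |(m s' / W) * ((W / (N:ℝ)) * φ s' - (α * hb (p s') + β))| :=
          Finset.abs_sum_le_sum_abs _ _
      _ ≤ ∑ s' : Fin k → Bool, (m s' / W) * (ε + (k:ℝ) * lmax / N) :=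
          Finset.sum_le_sum fun s' _ => hterm s'
      _ = ε + (k:ℝ) * lmax / N := by
          rw [← Finset.sum_mul, hw1, one_mul]
  rw [hsplit, hid]
  calc |head / (N:ℝ) + ∑ s', (m s' / W) * ((W / (N:ℝ)) * φ s' - (α * hb (p s') + β))|
      ≤ |head / (N:ℝ)|
        + |∑ s', (m s' / W) * ((W / (N:ℝ)) * φ s' - (α * hb (p s') + β))| := abs_add_le _ _
    _ ≤ (k:ℝ) * lmax / N + (ε + (k:ℝ) * lmax / N) := by
        rw [abs_of_nonneg (by positivity : (0:ℝ) ≤ head / (N:ℝ))]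
        have : head / (N:ℝ) ≤ (k:ℝ) * lmax / N := by gcongr
        linarith
    _ = ε + 2 * (k:ℝ) * lmax / N := by ring
lemma limsup_close {a e : ℕ → ℝ} {Ca Ce α β ε : ℝ} (hα : 0 ≤ α)
    (ha0 : ∀ n, 0 ≤ a n) (ha1 : ∀ n, a n ≤ Ca)
    (he0 : ∀ n, 0 ≤ e n) (he1 : ∀ n, e n ≤ Ce)
    (h : ∀ η : ℝ, 0 < η → ∀ᶠ n in Filter.atTop, |a n - (α * e n + β)| ≤ ε + η) :
    |Filter.limsup a Filter.atTop - (α * Filter.limsup e Filter.atTop + β)| ≤ ε := by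
  have hba : Filter.IsBoundedUnder (· ≤ ·) Filter.atTop a :=
    Filter.isBoundedUnder_of ⟨Ca, ha1⟩
  have hca : Filter.IsCoboundedUnder (· ≤ ·) Filter.atTop a :=
    (Filter.isBoundedUnder_of ⟨0, ha0⟩ :
      Filter.IsBoundedUnder (· ≥ ·) Filter.atTop a).isCoboundedUnder_le
  have hbe : Filter.IsBoundedUnder (· ≤ ·) Filter.atTop e :=
    Filter.isBoundedUnder_of ⟨Ce, he1⟩
  have hce : Filter.IsCoboundedUnder (· ≤ ·) Filter.atTop e :=
    (Filter.isBoundedUnder_of ⟨0, he0⟩ :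
      Filter.IsBoundedUnder (· ≥ ·) Filter.atTop e).isCoboundedUnder_le
  set A := Filter.limsup a Filter.atTop with hA
  set E := Filter.limsup e Filter.atTop with hE
  have hlow : α * E + β - ε ≤ A := by
    have hstep : ∀ η : ℝ, 0 < η → α * E + β - ε ≤ A + η := by
      intro η hη
      have hη'pos : 0 < η / (2 * (α + 1)) := by positivity
      have hfreq : ∃ᶠ n in Filter.atTop, E - η / (2 * (α + 1)) < e n :=
        Filter.frequently_lt_of_lt_limsup hce (by linarith)
      have hev := h (η/2) (by linarith)
      have hfreq2 : ∃ᶠ n in Filter.atTop, α * E + β - ε - η ≤ a n := by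
        refine (hfreq.and_eventually hev).mono ?_
        rintro n ⟨h1, h2⟩
        have h3 := (abs_le.1 h2).1
        have h4 : α * (E - η / (2 * (α + 1))) ≤ α * e n :=
          mul_le_mul_of_nonneg_left h1.le hα
        have h5 : α * (η / (2 * (α + 1))) ≤ η / 2 := by
          rw [← mul_div_assoc, div_le_div_iff₀ (by positivity) (by norm_num : (0:ℝ) < 2)]
          nlinarith
        nlinarith
      have := Filter.le_limsup_of_frequently_le hfreq2 hba
      linarith
    by_contra hcon
    push_neg at hcon
    have := hstep ((α * E + β - ε - A) / 2) (by linarith)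
    linarith
  have hup : A ≤ α * E + β + ε := by
    have hstep : ∀ η : ℝ, 0 < η → A ≤ α * E + β + ε + η := by
      intro η hη
      have hη'pos : 0 < η / (2 * (α + 1)) := by positivity
      have hev1 : ∀ᶠ n in Filter.atTop, e n < E + η / (2 * (α + 1)) :=
        Filter.eventually_lt_of_limsup_lt (by linarith) hbe
      have hev := h (η/2) (by linarith)
      have hev2 : ∀ᶠ n in Filter.atTop, a n ≤ α * E + β + ε + η := by
        refine (hev1.and hev).mono ?_
        rintro n ⟨h1, h2⟩
        have h3 := (abs_le.1 h2).2
        have h4 : α * e n ≤ α * (E + η / (2 * (α + 1))) :=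
          mul_le_mul_of_nonneg_left h1.le hα
        have h5 : α * (η / (2 * (α + 1))) ≤ η / 2 := by
          rw [← mul_div_assoc, div_le_div_iff₀ (by positivity) (by norm_num : (0:ℝ) < 2)]
          nlinarith
        nlinarith
      have := Filter.limsup_le_of_le hca hev2
      linarith
    by_contra hcon
    push_neg at hcon
    have := hstep ((A - (α * E + β + ε)) / 2) (by linarith)
    linarith
  rw [abs_le]
  exact ⟨by linarith, by linarith⟩
lemma cumLoss_eq_sum {B : Type*} [Fintype B] (l : Bool → unitInterval → ℝ)
    (Ψ : ∀ t : ℕ, (Fin t → Bool) → B) (F : ∀ t : ℕ, (Fin t → Bool) → unitInterval)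
    (x : B → Bool) :
    cumLoss l Ψ F x = ∑ t ∈ Finset.range (Fintype.card B),
      l (scanSeq Ψ x t) (F t fun i : Fin t => scanSeq Ψ x i.1) := by
  rw [← Fin.sum_univ_eq_sum_range
    (fun t => l (scanSeq Ψ x t) (F t fun i : Fin t => scanSeq Ψ x i.1)) (Fintype.card B)]
  rfl

lemma scan_bound {lmax : ℝ} {l : Bool → unitInterval → ℝ}
    (hl : ∀ b q, 0 ≤ l b q ∧ l b q ≤ lmax)
    (x : ℕ × ℕ → Bool)
    (Psi : (n : ℕ) → ∀ t : ℕ, (Fin t → Bool) → Fin (n + 1) × Fin (n + 1))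
    (g : (n k : ℕ) → (Fin k → Bool) → unitInterval)
    (hg : ∀ (n k : ℕ) (s' : Fin k → Bool) (q : unitInterval),
      condP (scanSeq (Psi n) (restrB (n + 1) x)) ((n + 1) * (n + 1)) k s' false
            * l false (g n k s')
          + condP (scanSeq (Psi n) (restrB (n + 1) x)) ((n + 1) * (n + 1)) k s' true
            * l true (g n k s')
        ≤ condP (scanSeq (Psi n) (restrB (n + 1) x)) ((n + 1) * (n + 1)) k s' false
            * l false q
          + condP (scanSeq (Psi n) (restrB (n + 1) x)) ((n + 1) * (n + 1)) k s' true
            * l true q)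
    (F : (n k : ℕ) → ∀ t : ℕ, (Fin t → Bool) → unitInterval)
    (hF : ∀ (n k t : ℕ) (ht : k ≤ t) (p : Fin t → Bool),
      F n k t p = g n k fun i : Fin k => p ⟨t - k + i.1, Nat.lt_of_lt_of_le (Nat.add_lt_add_left i.isLt _) (le_of_eq (Nat.sub_add_cancel ht))⟩)
    (Hv L : ℝ)
    (hH : Filter.Tendsto (fun k =>
        Filter.limsup (fun n =>
          empCondEnt (scanSeq (Psi n) (restrB (n + 1) x)) ((n + 1) * (n + 1)) k)
          Filter.atTop) Filter.atTop (nhds Hv))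
    (hL : Filter.Tendsto (fun k =>
        Filter.limsup (fun n =>
          cumLoss l (Psi n) (F n k) (restrB (n + 1) x) / ((n : ℝ) + 1) ^ 2)
          Filter.atTop) Filter.atTop (nhds L))
    (α β : ℝ) (hα : 0 ≤ α) :
    |L - (α * Hv + β)| ≤ epsF l α β := by
  have hlm := lmax_nonneg hl
  set y : ℕ → ℕ → Bool := fun n => scanSeq (Psi n) (restrB (n+1) x) with hy
  set a : ℕ → ℕ → ℝ := fun k n =>
    cumLoss l (Psi n) (F n k) (restrB (n + 1) x) / ((n : ℝ) + 1) ^ 2 with ha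
  set e : ℕ → ℕ → ℝ := fun k n => empCondEnt (y n) ((n+1)*(n+1)) k with he
  have hcard : ∀ n : ℕ, Fintype.card (Fin (n+1) × Fin (n+1)) = (n+1)*(n+1) := by
    intro n; simp
  have hcast : ∀ n : ℕ, (((n+1)*(n+1) : ℕ) : ℝ) = ((n:ℝ)+1)^2 := by
    intro n; push_cast; ring
  have hNpos : ∀ n : ℕ, (0:ℝ) < (((n+1)*(n+1) : ℕ) : ℝ) := by
    intro n
    have : 0 < (n+1)*(n+1) := Nat.mul_pos n.succ_pos n.succ_pos
    exact_mod_cast this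
  have ha_eq : ∀ k n, a k n = (∑ t ∈ Finset.range ((n+1)*(n+1)),
      l (y n t) (F n k t fun i : Fin t => y n i.1)) / (((n+1)*(n+1) : ℕ) : ℝ) := by
    intro k n
    show cumLoss l (Psi n) (F n k) (restrB (n + 1) x) / ((n : ℝ) + 1) ^ 2 = _
    rw [cumLoss_eq_sum, hcard n, hcast n]
  have ha0 : ∀ k n, 0 ≤ a k n := by
    intro k n
    rw [ha_eq]
    exact div_nonneg (Finset.sum_nonneg fun t _ => (hl _ _).1) (Nat.cast_nonneg _)
  have ha1 : ∀ k n, a k n ≤ lmax := by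
    intro k n
    rw [ha_eq, div_le_iff₀ (hNpos n)]
    calc (∑ t ∈ Finset.range ((n+1)*(n+1)), l (y n t) (F n k t fun i : Fin t => y n i.1))
        ≤ ∑ _t ∈ Finset.range ((n+1)*(n+1)), lmax :=
          Finset.sum_le_sum fun t _ => (hl _ _).2
      _ = lmax * (((n+1)*(n+1) : ℕ) : ℝ) := by
          rw [Finset.sum_const, Finset.card_range, nsmul_eq_mul]
          ring
  have he0 : ∀ k n, 0 ≤ e k n := fun k n => empCondEnt_nonneg (y n) _ k
  have he1 : ∀ k n, e k n ≤ Real.log 2 := fun k n => empCondEnt_le_log_two (y n) _ k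
  have hk : ∀ k, |Filter.limsup (a k) Filter.atTop
      - (α * Filter.limsup (e k) Filter.atTop + β)| ≤ epsF l α β := by
    intro k
    refine limsup_close hα (ha0 k) (ha1 k) (he0 k) (he1 k) ?_
    intro η hη
    have h1 : ∀ᶠ n : ℕ in Filter.atTop, k < (n+1)*(n+1) := by
      filter_upwards [Filter.eventually_ge_atTop k] with n hn
      calc k < n + 1 := Nat.lt_succ_of_le hn
        _ ≤ (n+1)*(n+1) := Nat.le_mul_of_pos_left _ n.succ_pos
    have h2 : Filter.Tendsto (fun n : ℕ => 2 * (k:ℝ) * lmax / (((n+1)*(n+1) : ℕ) : ℝ))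
        Filter.atTop (nhds 0) := by
      apply Filter.Tendsto.div_atTop tendsto_const_nhds
      apply Filter.Tendsto.comp tendsto_natCast_atTop_atTop
      apply Filter.tendsto_atTop_mono (fun n : ℕ => ?_) Filter.tendsto_id
      calc (id n : ℕ) ≤ n + 1 := Nat.le_succ n
        _ ≤ (n+1)*(n+1) := Nat.le_mul_of_pos_left _ n.succ_pos
    have h3 : ∀ᶠ n : ℕ in Filter.atTop,
        2 * (k:ℝ) * lmax / (((n+1)*(n+1) : ℕ) : ℝ) < η :=
      h2.eventually_lt_const hη
    filter_upwards [h1, h3] with n hn1 hn3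
    rw [ha_eq k n]
    have hkey := key_bound hl (y n) hn1 (g n k) (hg n k) (F n k)
      (fun t ht p => hF n k t ht p) α β
    refine hkey.trans ?_
    have hcongr : 2 * (k:ℝ) * lmax / (((n+1)*(n+1):ℕ):ℝ) < η := hn3
    push_cast at hcongr ⊢
    linarith
  have ht : Filter.Tendsto (fun k => Filter.limsup (a k) Filter.atTop
      - (α * Filter.limsup (e k) Filter.atTop + β)) Filter.atTop
      (nhds (L - (α * Hv + β))) := by
    exact Filter.Tendsto.sub hL ((hH.const_mul α).add_const β)
  exact le_of_tendsto ht.abs (Filter.Eventually.of_forall hk)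
/-- (Sizes are parameterized as `(n+1) × (n+1)`.)  For two sequences of
scans `Ψ¹, Ψ²` of an infinite individual binary image, with optimal empirical `k`-th order
Markov predictors (context functions `g` minimizing the empirical conditional risk,
arbitrary on the first `k` steps): if the asymptotic empirical conditional entropies
coincide (`Ĥ_{Ψ¹}(x) = Ĥ_{Ψ²}(x) = Hv`) and the asymptotic losses `L_{Ψ¹}(x), L_{Ψ²}(x)`
exist, then `|L_{Ψ¹}(x) − L_{Ψ²}(x)| ≤ 2·ε_l`. -/
theorem statement19
    (lmax : ℝ) (l : Bool → unitInterval → ℝ) (hl : ∀ b q, 0 ≤ l b q ∧ l b q ≤ lmax)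
    (x : ℕ × ℕ → Bool)
    (Psi1 Psi2 : (n : ℕ) → ∀ t : ℕ, (Fin t → Bool) → Fin (n + 1) × Fin (n + 1))
    (hval1 : ∀ n, IsValidScan (Psi1 n)) (hval2 : ∀ n, IsValidScan (Psi2 n))
    (g1 g2 : (n k : ℕ) → (Fin k → Bool) → unitInterval)
    (hg1 : ∀ (n k : ℕ) (s' : Fin k → Bool) (q : unitInterval),
      condP (scanSeq (Psi1 n) (restrB (n + 1) x)) ((n + 1) * (n + 1)) k s' false
            * l false (g1 n k s')
          + condP (scanSeq (Psi1 n) (restrB (n + 1) x)) ((n + 1) * (n + 1)) k s' true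
            * l true (g1 n k s')
        ≤ condP (scanSeq (Psi1 n) (restrB (n + 1) x)) ((n + 1) * (n + 1)) k s' false
            * l false q
          + condP (scanSeq (Psi1 n) (restrB (n + 1) x)) ((n + 1) * (n + 1)) k s' true
            * l true q)
    (hg2 : ∀ (n k : ℕ) (s' : Fin k → Bool) (q : unitInterval),
      condP (scanSeq (Psi2 n) (restrB (n + 1) x)) ((n + 1) * (n + 1)) k s' false
            * l false (g2 n k s')
          + condP (scanSeq (Psi2 n) (restrB (n + 1) x)) ((n + 1) * (n + 1)) k s' true
            * l true (g2 n k s')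
        ≤ condP (scanSeq (Psi2 n) (restrB (n + 1) x)) ((n + 1) * (n + 1)) k s' false
            * l false q
          + condP (scanSeq (Psi2 n) (restrB (n + 1) x)) ((n + 1) * (n + 1)) k s' true
            * l true q)
    (F1 F2 : (n k : ℕ) → ∀ t : ℕ, (Fin t → Bool) → unitInterval)
    (hF1 : ∀ (n k t : ℕ) (ht : k ≤ t) (p : Fin t → Bool),
      F1 n k t p = g1 n k fun i : Fin k => p ⟨t - k + i.1, by have := i.isLt; omega⟩)
    (hF2 : ∀ (n k t : ℕ) (ht : k ≤ t) (p : Fin t → Bool),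
      F2 n k t p = g2 n k fun i : Fin k => p ⟨t - k + i.1, by have := i.isLt; omega⟩)
    (Hv L1 L2 : ℝ)
    (hH1 : Filter.Tendsto (fun k =>
        Filter.limsup (fun n =>
          empCondEnt (scanSeq (Psi1 n) (restrB (n + 1) x)) ((n + 1) * (n + 1)) k)
          Filter.atTop) Filter.atTop (nhds Hv))
    (hH2 : Filter.Tendsto (fun k =>
        Filter.limsup (fun n =>
          empCondEnt (scanSeq (Psi2 n) (restrB (n + 1) x)) ((n + 1) * (n + 1)) k)
          Filter.atTop) Filter.atTop (nhds Hv))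
    (hL1 : Filter.Tendsto (fun k =>
        Filter.limsup (fun n =>
          cumLoss l (Psi1 n) (F1 n k) (restrB (n + 1) x) / ((n : ℝ) + 1) ^ 2)
          Filter.atTop) Filter.atTop (nhds L1))
    (hL2 : Filter.Tendsto (fun k =>
        Filter.limsup (fun n =>
          cumLoss l (Psi2 n) (F2 n k) (restrB (n + 1) x) / ((n : ℝ) + 1) ^ 2)
          Filter.atTop) Filter.atTop (nhds L2)) :
    |L1 - L2| ≤ 2 * epsL l := by
  have key : ∀ α β : ℝ, 0 ≤ α → |L1 - L2| ≤ 2 * epsF l α β := by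
    intro α β hα
    have h1 := scan_bound hl x Psi1 g1 hg1 F1 hF1 Hv L1 hH1 hL1 α β hα
    have h2 := scan_bound hl x Psi2 g2 hg2 F2 hF2 Hv L2 hH2 hL2 α β hα
    have a1 := abs_le.1 h1
    have a2 := abs_le.1 h2
    exact abs_le.2 ⟨by linarith, by linarith⟩
  have main : ∀ ab : ℝ × ℝ, |L1 - L2| / 2 ≤ epsF l ab.1 ab.2 := by
    rintro ⟨α, β⟩
    obtain ⟨α', β', hα', hle⟩ := epsF_reduction hl α β
    have hk := key α' β' hα'
    simp only at hle hk ⊢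
    linarith
  have hfin : |L1 - L2| / 2 ≤ epsL l := le_ciInf main
  linarith

end Scandiction
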